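/- arXiv:2009.04760 — 5 statements merged into one kernel-verified Lean document; each statement's English description precedes it below -/
import Mathlib

section
/- For h ∈ ℂ with -1/2 < Re(h) < 1/2, the integral ∫₀^∞ x^{2h}/(π(1+x²)) dx equals 1/(2 cos(π h)). -/
/-!
With `s = 2h + 1`, the substitution `x = √u` turns the integral into `∫₀^∞ u^(s/2-1)/(1+u) du`,
and `u = t/(1-t)` turns the latter into the beta integral `B(s/2, 1 - s/2)`. By Euler's
reflection formula this is `Γ(s/2) Γ(1-s/2) = π / sin(π s/2)`, and `sin(π(h + 1/2)) = cos(π h)`.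
-/

open MeasureTheory Set

lemma image_div_one_sub_Ioo : (fun t : ℝ => t / (1 - t)) '' Ioo 0 1 = Ioi 0 := by
  ext y
  constructor
  · rintro ⟨t, ⟨ht0, ht1⟩, rfl⟩
    exact div_pos ht0 (sub_pos.2 ht1)
  · intro (hy : 0 < y)
    refine ⟨y / (1 + y), ⟨by positivity, (div_lt_one (by positivity)).2 (by linarith)⟩, ?_⟩
    field_simp
    ring

lemma injOn_div_one_sub : InjOn (fun t : ℝ => t / (1 - t)) (Iio 1) := by
  intro a (ha : a < 1) b (hb : b < 1) hab
  have : (1:ℝ) - a ≠ 0 := by linarith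
  have : (1:ℝ) - b ≠ 0 := by linarith
  field_simp at hab
  linarith

lemma hasDerivAt_div_one_sub {t : ℝ} (ht : t ≠ 1) :
    HasDerivAt (fun t : ℝ => t / (1 - t)) ((1 - t) ^ 2)⁻¹ t := by
  have ht' : 1 - t ≠ 0 := sub_ne_zero.2 ht.symm
  refine ((hasDerivAt_id' t).div ((hasDerivAt_id' t).const_sub 1) ht').congr_deriv ?_
  field_simp
  ring

lemma beta_integrand_comp_div_one_sub {t : ℝ} (ht0 : 0 < t) (ht1 : t < 1) (u v : ℂ) :
    |((1 - t) ^ 2)⁻¹| • ((((t / (1 - t) : ℝ) : ℂ)) ^ (u - 1) *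
      (1 + (((t / (1 - t) : ℝ) : ℂ))) ^ (-(u + v))) =
      (t : ℂ) ^ (u - 1) * (1 - (t : ℂ)) ^ (v - 1) := by
  have hpos : 0 < 1 - t := sub_pos.2 ht1
  have hsum : (1 : ℂ) + ((t / (1 - t) : ℝ) : ℂ) = ((1 - t : ℝ) : ℂ)⁻¹ := by
    rw [← Complex.ofReal_one, ← Complex.ofReal_add, ← Complex.ofReal_inv]
    congr 1
    field_simp
    ring
  have ha : ((1 - t : ℝ) : ℂ) ≠ 0 := Complex.ofReal_ne_zero.2 hpos.ne'
  rw [hsum, Complex.inv_cpow_ofReal_nonneg hpos.le, Complex.cpow_neg, inv_inv,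
    Complex.ofReal_div, Complex.div_cpow_ofReal_nonneg ht0.le hpos.le,
    abs_of_pos (by positivity), Complex.real_smul, Complex.ofReal_inv, Complex.ofReal_pow,
    show 1 - (t : ℂ) = ((1 - t : ℝ) : ℂ) by push_cast; rfl]
  generalize ((1 - t : ℝ) : ℂ) = a at ha ⊢
  have hsplit : a ^ (u + v) = a ^ (u - 1) * a ^ (v - 1) * a ^ 2 := by
    rw [← Complex.cpow_add _ _ ha, ← Complex.cpow_two, ← Complex.cpow_add _ _ ha]
    ring_nf
  have : a ^ (u - 1) ≠ 0 := Complex.cpow_ne_zero_iff.2 (Or.inl ha)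
  rw [hsplit]
  field_simp

theorem integral_Ioi_cpow_mul_one_add_cpow_eq_betaIntegral (u v : ℂ) :
    ∫ x in Ioi (0:ℝ), (x : ℂ) ^ (u - 1) * (1 + (x : ℂ)) ^ (-(u + v)) =
      Complex.betaIntegral u v := by
  rw [← image_div_one_sub_Ioo, integral_image_eq_integral_abs_deriv_smul measurableSet_Ioo
      (fun t ht => (hasDerivAt_div_one_sub ht.2.ne).hasDerivWithinAt)
      (injOn_div_one_sub.mono Ioo_subset_Iio_self),
    Complex.betaIntegral, intervalIntegral.integral_of_le zero_le_one,
    integral_Ioc_eq_integral_Ioo]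
  exact setIntegral_congr_fun measurableSet_Ioo fun t ht =>
    beta_integrand_comp_div_one_sub ht.1 ht.2 u v

theorem betaIntegral_one_sub {s : ℂ} (hs0 : 0 < s.re) (hs1 : s.re < 1) :
    Complex.betaIntegral s (1 - s) = Real.pi / Complex.sin (Real.pi * s) := by
  have h := Complex.Gamma_mul_Gamma_eq_betaIntegral hs0 (by simpa using hs1 : 0 < (1 - s).re)
  rwa [add_sub_cancel, Complex.Gamma_one, one_mul, Complex.Gamma_mul_Gamma_one_sub, eq_comm] at h

theorem integral_Ioi_cpow_div_one_add {s : ℂ} (hs0 : 0 < s.re) (hs1 : s.re < 1) :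
    ∫ x in Ioi (0:ℝ), (x : ℂ) ^ (s - 1) / (1 + (x : ℂ)) =
      Real.pi / Complex.sin (Real.pi * s) := by
  simp only [← betaIntegral_one_sub hs0 hs1, ← integral_Ioi_cpow_mul_one_add_cpow_eq_betaIntegral,
    add_sub_cancel, Complex.cpow_neg_one, div_eq_mul_inv]

theorem integral_Ioi_cpow_div_one_add_sq {s : ℂ} (hs0 : 0 < s.re) (hs1 : s.re < 2) :
    ∫ x in Ioi (0:ℝ), (x : ℂ) ^ (s - 1) / (1 + (x : ℂ) ^ 2) =
      Real.pi / (2 * Complex.sin (Real.pi * s / 2)) := by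
  have hsub := integral_comp_rpow_Ioi_of_pos (g := fun y : ℝ => (y : ℂ) ^ (s / 2 - 1) / (1 + y))
    two_pos
  rw [integral_Ioi_cpow_div_one_add (by simpa using hs0)
    (by rw [Complex.div_ofNat_re]; linarith)] at hsub
  have hpoint : ∀ x ∈ Ioi (0:ℝ), (2 * x ^ ((2:ℝ) - 1)) • (((x ^ (2:ℝ) : ℝ) : ℂ) ^ (s / 2 - 1) /
      (1 + ((x ^ (2:ℝ) : ℝ) : ℂ))) = 2 * ((x : ℂ) ^ (s - 1) / (1 + (x : ℂ) ^ 2)) := by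
    intro x (hx : 0 < x)
    have hxC : (x : ℂ) ≠ 0 := Complex.ofReal_ne_zero.2 hx.ne'
    rw [← Complex.cpow_mul_ofReal_nonneg hx.le, Complex.ofReal_cpow hx.le,
      show (2:ℝ) - 1 = 1 by norm_num, Real.rpow_one, Complex.real_smul,
      show ((2:ℝ) : ℂ) * (s / 2 - 1) = s - 1 - 1 by push_cast; ring, Complex.ofReal_ofNat,
      Complex.cpow_two, Complex.cpow_sub _ _ hxC, Complex.cpow_one]
    push_cast
    field_simp
  rw [setIntegral_congr_fun measurableSet_Ioi hpoint, integral_const_mul] at hsub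
  rw [eq_div_of_mul_eq two_ne_zero ((mul_comm _ _).trans hsub), div_div,
    mul_comm (Complex.sin _), mul_div_assoc]

theorem stmt0 (h : ℂ) (h1 : -(1/2) < h.re) (h2 : h.re < 1/2) :
    ∫ x in Set.Ioi (0:ℝ), (x : ℂ) ^ (2*h) / ((Real.pi : ℂ) * (1 + (x:ℂ)^2)) =
      1 / (2 * Complex.cos (Real.pi * h)) := by
  have hsin : Complex.sin (Real.pi * (2 * h + 1) / 2) = Complex.cos (Real.pi * h) := by
    rw [← Complex.sin_add_pi_div_two]
    ring_nf
  have hre : (2 * h + 1).re = 2 * h.re + 1 := by simp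
  have hint := integral_Ioi_cpow_div_one_add_sq (s := 2 * h + 1) (by rw [hre]; linarith)
    (by rw [hre]; linarith)
  rw [add_sub_cancel_right, hsin] at hint
  simp_rw [mul_comm (Real.pi : ℂ), ← div_div]
  rw [integral_div, hint]
  field_simp
end

section
/- The function ρ(x) = (−1 + e^{2/(1+x²)} cos(2x/(1+x²)))/(2π) is a probability density on ℝ: it is nonnegative and integrates to 1. -/
/-!
With `φ(x) = (1 - x i)⁻¹ = (1 + x i) / (1 + x²)`, the numerator of the density is
`Re (exp (2 φ(x)) - 1)`. Expanding the exponential, the linear term `Re (2 φ) = 2 / (1 + x²)`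
integrates to `2π`, while each higher power `φ ^ k`, `k ≥ 2`, integrates to zero: since
`φ' = i φ²`, it has the antiderivative `φ ^ (k - 1) / ((k - 1) i)`, which vanishes at `±∞`.
All terms are dominated by multiples of `(1 + x²)⁻¹`, so the series may be integrated termwise.

For nonnegativity, `2 φ(x) = u + v i` lies on the circle `|z - 1| = 1`, i.e. `v² = 2u - u²`, so
`cos v ≥ 1 - v² / 2` reduces the claim to `exp u * (1 - u + u² / 2) ≥ 1` for `u ≥ 0`.
-/

open MeasureTheory Filter Topology Complex
open scoped Real

-- `(1 + u + u²/2)(1 - u + u²/2) = 1 + u⁴/4` and `1 + u + u²/2 ≤ exp u`.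
lemma one_le_exp_mul_one_sub_add_sq_div_two {u : ℝ} (hu : 0 ≤ u) :
    1 ≤ Real.exp u * (1 - u + u ^ 2 / 2) := by
  have hq : 0 ≤ 1 - u + u ^ 2 / 2 := by nlinarith [sq_nonneg (u - 1)]
  calc 1 ≤ (1 + u + u ^ 2 / 2) * (1 - u + u ^ 2 / 2) := by nlinarith [pow_nonneg hu 4]
    _ ≤ Real.exp u * (1 - u + u ^ 2 / 2) :=
      mul_le_mul_of_nonneg_right (Real.quadratic_le_exp_of_nonneg hu) hq

lemma one_le_exp_mul_cos (x : ℝ) :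
    1 ≤ Real.exp (2 / (1 + x ^ 2)) * Real.cos (2 * x / (1 + x ^ 2)) := by
  set u := 2 / (1 + x ^ 2)
  set v := 2 * x / (1 + x ^ 2)
  have hv : 1 - v ^ 2 / 2 = 1 - u + u ^ 2 / 2 := by
    simp only [u, v]
    field_simp
    ring
  calc 1 ≤ Real.exp u * (1 - v ^ 2 / 2) :=
        hv ▸ one_le_exp_mul_one_sub_add_sq_div_two (by positivity)
    _ ≤ Real.exp u * Real.cos v := by
        gcongr
        exact Real.one_sub_sq_div_two_le_cos

noncomputable def phi (x : ℝ) : ℂ := (1 - x * I)⁻¹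

lemma one_sub_ofReal_mul_I_ne_zero (x : ℝ) : (1 - x * I : ℂ) ≠ 0 := by
  intro h
  simpa using congrArg re h

lemma re_phi (x : ℝ) : (phi x).re = (1 + x ^ 2)⁻¹ := by
  simp [phi, inv_re, normSq_apply]
  ring

lemma im_phi (x : ℝ) : (phi x).im = x / (1 + x ^ 2) := by
  simp [phi, inv_im, normSq_apply]
  ring

lemma sq_norm_phi (x : ℝ) : ‖phi x‖ ^ 2 = (1 + x ^ 2)⁻¹ := by
  rw [Complex.sq_norm, phi, map_inv₀, normSq_apply]
  simp
  ring

lemma norm_phi_le_one (x : ℝ) : ‖phi x‖ ≤ 1 := by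
  rw [← sq_le_one_iff₀ (norm_nonneg _), sq_norm_phi]
  exact inv_le_one_of_one_le₀ (by nlinarith [sq_nonneg x])

lemma norm_phi_pow_le {k : ℕ} (hk : 2 ≤ k) (x : ℝ) :
    ‖phi x ^ k‖ ≤ (1 + x ^ 2)⁻¹ := by
  rw [norm_pow, ← sq_norm_phi]
  exact pow_le_pow_of_le_one (norm_nonneg _) (norm_phi_le_one x) hk

lemma abs_re_phi_pow_le {k : ℕ} (hk : 1 ≤ k) (x : ℝ) :
    |(phi x ^ k).re| ≤ (1 + x ^ 2)⁻¹ := by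
  obtain rfl | hk := hk.eq_or_lt
  · rw [pow_one, re_phi, abs_of_pos (by positivity)]
  · exact (abs_re_le_norm _).trans (norm_phi_pow_le hk x)

lemma continuous_phi : Continuous phi :=
  (continuous_const.sub (continuous_ofReal.mul continuous_const)).inv₀
    one_sub_ofReal_mul_I_ne_zero

lemma hasDerivAt_phi (x : ℝ) : HasDerivAt phi (I * phi x ^ 2) x := by
  have h : HasDerivAt (fun x : ℝ => (1 - x * I : ℂ)) (-I) x := by
    simpa using ((hasDerivAt_id x).ofReal_comp.mul_const I).const_sub 1
  refine (h.inv (one_sub_ofReal_mul_I_ne_zero x)).congr_deriv ?_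
  rw [phi, inv_pow]
  ring

lemma tendsto_phi_cocompact : Tendsto phi (cocompact ℝ) (𝓝 0) := by
  refine tendsto_inv₀_cobounded.comp (tendsto_norm_atTop_iff_cobounded.mp ?_)
  refine tendsto_atTop_mono (fun x => ?_) tendsto_norm_cocompact_atTop
  simpa using abs_im_le_norm (1 - x * I : ℂ)

lemma integrable_phi_pow {k : ℕ} (hk : 2 ≤ k) : Integrable fun x => phi x ^ k :=
  integrable_inv_one_add_sq.mono' (continuous_phi.pow k).aestronglyMeasurable
    (.of_forall (norm_phi_pow_le hk))

lemma integral_phi_pow_add_two (m : ℕ) : ∫ x, phi x ^ (m + 2) = 0 := by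
  set F : ℝ → ℂ := fun x => phi x ^ (m + 1) / ((m + 1 : ℂ) * I)
  have hF (x : ℝ) : HasDerivAt F (phi x ^ (m + 2)) x := by
    refine (((hasDerivAt_phi x).pow (m + 1)).div_const ((m + 1 : ℂ) * I)).congr_deriv ?_
    field_simp
    push_cast
    ring
  have hlim : Tendsto F (cocompact ℝ) (𝓝 0) := by
    simpa [F] using (tendsto_phi_cocompact.pow (m + 1)).div_const ((m + 1 : ℂ) * I)
  simpa using integral_of_hasDerivAt_of_tendsto hF (integrable_phi_pow (by omega))
    (hlim.mono_left atBot_le_cocompact) (hlim.mono_left atTop_le_cocompact)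

lemma integrable_re_phi_pow {k : ℕ} (hk : 1 ≤ k) : Integrable fun x => (phi x ^ k).re :=
  integrable_inv_one_add_sq.mono' (continuous_re.comp (continuous_phi.pow k)).aestronglyMeasurable
    (.of_forall (abs_re_phi_pow_le hk))

lemma integral_abs_re_phi_pow_le {k : ℕ} (hk : 1 ≤ k) : ∫ x, |(phi x ^ k).re| ≤ π := by
  rw [← integral_univ_inv_one_add_sq]
  exact integral_mono (integrable_re_phi_pow hk).abs integrable_inv_one_add_sq
    (abs_re_phi_pow_le hk)

lemma integral_re_phi : ∫ x, (phi x).re = π := by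
  simp_rw [re_phi]
  exact integral_univ_inv_one_add_sq

lemma integral_re_phi_pow_add_two (m : ℕ) : ∫ x, (phi x ^ (m + 2)).re = 0 := by
  simpa [integral_phi_pow_add_two] using integral_re (integrable_phi_pow (k := m + 2) (by omega))

lemma hasSum_re_exp_sub_one (z : ℂ) :
    HasSum (fun n : ℕ => (z ^ (n + 1) / (n + 1).factorial).re) (exp z - 1).re := by
  have h := (hasSum_nat_add_iff' 1).mpr (exp_eq_exp_ℂ ▸ NormedSpace.expSeries_div_hasSum_exp z)
  simpa using h.mapL reCLM

lemma re_exp_mul_phi_sub_one (c x : ℝ) :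
    (exp (c * phi x) - 1).re =
      -1 + Real.exp (c / (1 + x ^ 2)) * Real.cos (c * x / (1 + x ^ 2)) := by
  rw [sub_re, exp_re, re_ofReal_mul, im_ofReal_mul, re_phi, im_phi, one_re]
  ring_nf

lemma integral_re_exp_mul_phi_sub_one (c : ℝ) : ∫ x, (exp (c * phi x) - 1).re = c * π := by
  set a : ℕ → ℝ := fun n => c ^ (n + 1) / (n + 1).factorial
  have hterm (x : ℝ) (n : ℕ) :
      ((c * phi x) ^ (n + 1) / (n + 1).factorial).re = a n * (phi x ^ (n + 1)).re := by
    rw [mul_pow, mul_div_right_comm, ← ofReal_pow, ← ofReal_natCast, ← ofReal_div,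
      re_ofReal_mul]
  have hint (n : ℕ) : Integrable fun x => a n * (phi x ^ (n + 1)).re :=
    (integrable_re_phi_pow (by omega)).const_mul _
  have hsum : Summable fun n => ∫ x, ‖a n * (phi x ^ (n + 1)).re‖ := by
    refine .of_nonneg_of_le (fun n => integral_nonneg fun x => norm_nonneg _) (fun n => ?_)
      (((summable_nat_add_iff 1).mpr (Real.summable_pow_div_factorial |c|)).mul_right π)
    simp_rw [norm_mul, Real.norm_eq_abs, integral_const_mul]
    refine mul_le_mul ?_ (integral_abs_re_phi_pow_le (by omega))
      (integral_nonneg fun _ => abs_nonneg _) (by positivity)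
    simp [a, abs_div, abs_pow]
  have hval : HasSum (fun n => ∫ x, a n * (phi x ^ (n + 1)).re) (c * π) := by
    convert hasSum_ite_eq 0 (c * π) with n
    rcases n with _ | m
    · simp [a, integral_const_mul, integral_re_phi]
    · simp [integral_const_mul, integral_re_phi_pow_add_two]
  rw [hval.unique (hasSum_integral_of_summable_integral_norm hint hsum)]
  congr 1 with x
  exact ((hasSum_re_exp_sub_one _).congr_fun fun n => (hterm x n).symm).tsum_eq.symm

theorem stmt5 :
    (∀ x : ℝ,
      0 ≤ (-1 + Real.exp (2/(1+x^2)) * Real.cos (2*x/(1+x^2))) / (2*Real.pi)) ∧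
    ∫ x : ℝ, (-1 + Real.exp (2/(1+x^2)) * Real.cos (2*x/(1+x^2))) / (2*Real.pi) = 1 := by
  refine ⟨fun x => div_nonneg (by linarith [one_le_exp_mul_cos x]) Real.two_pi_pos.le, ?_⟩
  simp_rw [← re_exp_mul_phi_sub_one 2]
  rw [integral_div, integral_re_exp_mul_phi_sub_one, div_self Real.two_pi_pos.ne']
end

section
/- Andréief identity: for integrable functions f₀,…,f_{N−1}, g₀,…,g_{N−1} on a measure space (E, μ), ∫_{E^N} det[f_j(x_k)]_{j,k=0}^{N−1} det[g_j(x_k)]_{j,k=0}^{N−1} dμ^{⊗N}(x) = N! · det[ ∫_E f_j(x) g_k(x) dμ(x) ]_{j,k=0}^{N−1}. -/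
/-!
Expanding both determinants by the Leibniz formula turns the integrand into a signed sum,
over pairs of permutations `(σ, τ)`, of products `∏ i, f (σ i) (x i) * g (τ i) (x i)` of
functions of one variable each, which Fubini integrates to `∏ i, ∫ f (σ i) * g (τ i)`.
For fixed `σ`, the substitution `τ ↦ τ * σ⁻¹` turns the sum over `τ` into the Leibniz
expansion of `det [∫ f j * g k]`, so each of the `N!` permutations `σ` contributes this
same determinant.
-/

open MeasureTheory Equiv Finset

namespace Matrix

variable {n R : Type*} [Fintype n] [DecidableEq n] [CommRing R]

theorem det_mul_det_eq_sum_sum (A B : Matrix n n R) :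
    A.det * B.det = ∑ σ : Perm n, ∑ τ : Perm n,
      ((Perm.sign σ : ℤ) : R) * ((Perm.sign τ : ℤ) : R) * ∏ i, A (σ i) i * B (τ i) i := by
  rw [det_apply', det_apply', sum_mul_sum]
  refine sum_congr rfl fun σ _ => sum_congr rfl fun τ _ => ?_
  rw [prod_mul_distrib]
  ring

theorem sum_sign_mul_sign_mul_prod_eq_det (A : Matrix n n R) (σ : Perm n) :
    ∑ τ : Perm n, ((Perm.sign σ : ℤ) : R) * ((Perm.sign τ : ℤ) : R) * ∏ i, A (σ i) (τ i)
      = A.det := by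
  rw [← det_transpose, det_apply']
  refine Fintype.sum_equiv (Equiv.mulRight σ⁻¹) _ _ fun τ => ?_
  have hsign : ((Perm.sign σ : ℤ) : R) * ((Perm.sign τ : ℤ) : R) =
      ((Perm.sign (τ * σ⁻¹) : ℤ) : R) := by
    simp only [Perm.sign_mul, Perm.sign_inv, Units.val_mul, Int.cast_mul]
    ring
  have hprod : ∏ i, A (σ i) (τ i) = ∏ i, Aᵀ ((τ * σ⁻¹) i) i := by
    rw [← Equiv.prod_comp σ fun i => Aᵀ ((τ * σ⁻¹) i) i]
    simp [transpose_apply]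
  rw [Equiv.coe_mulRight, hsign, hprod]

theorem sum_sum_sign_mul_sign_mul_prod_eq_factorial_mul_det (A : Matrix n n R) :
    ∑ σ : Perm n, ∑ τ : Perm n,
      ((Perm.sign σ : ℤ) : R) * ((Perm.sign τ : ℤ) : R) * ∏ i, A (σ i) (τ i) =
        (Fintype.card n).factorial * A.det := by
  simp only [sum_sign_mul_sign_mul_prod_eq_det, sum_const, card_univ, Fintype.card_perm,
    nsmul_eq_mul]

end Matrix

namespace MeasureTheory

theorem integral_det_mul_det {𝕜 ι E : Type*} [RCLike 𝕜] [Fintype ι] [DecidableEq ι]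
    [MeasurableSpace E] (μ : Measure E) [SigmaFinite μ] (f g : ι → E → 𝕜)
    (hint : ∀ j k, Integrable (fun x => f j x * g k x) μ) :
    ∫ x : ι → E, (Matrix.of fun j k => f j (x k)).det * (Matrix.of fun j k => g j (x k)).det
        ∂(Measure.pi fun _ => μ) =
      (Fintype.card ι).factorial * (Matrix.of fun j k => ∫ x, f j x * g k x ∂μ).det := by
  have hterm : ∀ σ τ : Perm ι,
      Integrable (fun x : ι → E => ∏ i, f (σ i) (x i) * g (τ i) (x i))
        (Measure.pi fun _ => μ) := fun σ τ =>
    Integrable.fintype_prod (f := fun i y => f (σ i) y * g (τ i) y) fun i => hint (σ i) (τ i)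
  simp only [Matrix.det_mul_det_eq_sum_sum, Matrix.of_apply]
  rw [integral_finsetSum _ fun σ _ =>
    integrable_finsetSum _ fun τ _ => (hterm σ τ).const_mul _]
  refine (Fintype.sum_congr _ _ fun σ => ?_).trans
    (Matrix.sum_sum_sign_mul_sign_mul_prod_eq_factorial_mul_det _)
  rw [integral_finsetSum _ fun τ _ => (hterm σ τ).const_mul _]
  refine Fintype.sum_congr _ _ fun τ => ?_
  rw [integral_const_mul, integral_fintype_prod_eq_prod fun i y => f (σ i) y * g (τ i) y]
  rfl

end MeasureTheory

theorem stmt11_general {E : Type*} [MeasurableSpace E] (μ : Measure E) [SigmaFinite μ]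
    (N : ℕ) (f g : Fin N → E → ℝ)
    (hint : ∀ j k, Integrable (fun x => f j x * g k x) μ) :
    ∫ x : Fin N → E,
        (Matrix.det (Matrix.of fun j k : Fin N => f j (x k))) *
        (Matrix.det (Matrix.of fun j k : Fin N => g j (x k)))
        ∂(Measure.pi fun _ => μ) =
      (Nat.factorial N : ℝ) *
        Matrix.det (Matrix.of fun j k : Fin N => ∫ x, f j x * g k x ∂μ) := by
  simpa using integral_det_mul_det μ f g hint

/-- Andréief identity. -/
theorem stmt11 {E : Type*} [MeasurableSpace E] (μ : Measure E) [SigmaFinite μ]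
    (N : ℕ) (f g : Fin N → E → ℝ)
    (hf : ∀ j, Measurable (f j)) (hg : ∀ j, Measurable (g j))
    (hint : ∀ j k, Integrable (fun x => f j x * g k x) μ) :
    ∫ x : Fin N → E,
        (Matrix.det (Matrix.of fun j k : Fin N => f j (x k))) *
        (Matrix.det (Matrix.of fun j k : Fin N => g j (x k)))
        ∂(Measure.pi fun _ => μ) =
      (Nat.factorial N : ℝ) *
        Matrix.det (Matrix.of fun j k : Fin N => ∫ x, f j x * g k x ∂μ) :=
  stmt11_general μ N f g hint
end

section
/- For integer m ≥ 0 and k ≥ 0: lim_{h→1/2} d/dh (−2h)_k equals 2(k−2)! if k ≥ 2, equals −2 if k = 1, and equals 0 if k = 0. -/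
open Polynomial

lemma asc_eval_neg_one {k : ℕ} (hk : 2 ≤ k) :
    (ascPochhammer ℝ k).eval (-1) = 0 := by
  obtain ⟨m, rfl⟩ := Nat.exists_eq_add_of_le hk
  induction m with
  | zero => simp [ascPochhammer_succ_eval]
  | succ n ih =>
    rw [show 2 + (n+1) = (2+n) + 1 by ring, ascPochhammer_succ_eval,
      ih (by omega)]
    ring

lemma asc_deriv_neg_one {k : ℕ} (hk : 2 ≤ k) :
    (ascPochhammer ℝ k).derivative.eval (-1) = -(Nat.factorial (k-2) : ℝ) := by
  induction k, hk using Nat.le_induction with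
  | base =>
    simp [ascPochhammer_succ_right, ascPochhammer_one]
  | succ n hn ih =>
    rw [ascPochhammer_succ_right, derivative_mul, eval_add, eval_mul, eval_mul, ih,
      asc_eval_neg_one hn]
    simp only [derivative_add, derivative_X, derivative_natCast, add_zero, eval_add, eval_X,
      eval_natCast, eval_one, mul_zero, zero_mul, add_zero, mul_one]
    have h1 : n + 1 - 2 = (n - 2) + 1 := by omega
    rw [h1, Nat.factorial_succ]
    have h2 : ((n : ℝ) - 1) = ((n - 2 : ℕ) + 1 : ℕ) := by
      push_cast [Nat.cast_sub (by omega : 2 ≤ n)]; ring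
    push_cast
    have : (-1 : ℝ) + n = (n - 2 : ℕ) + 1 := by
      push_cast [Nat.cast_sub (by omega : 2 ≤ n)]; ring
    rw [this]
    ring

theorem stmt15 (k : ℕ) :
    deriv (fun h : ℝ => (ascPochhammer ℝ k).eval (-2*h)) (1/2) =
      if k = 0 then 0 else if k = 1 then -2 else 2 * (Nat.factorial (k-2) : ℝ) := by
  have hinner : HasDerivAt (fun h : ℝ => -2 * h) (-2) (1/2) := by
    simpa using (hasDerivAt_id (1/2 : ℝ)).const_mul (-2)
  have hcomp : HasDerivAt (fun h : ℝ => (ascPochhammer ℝ k).eval (-2*h))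
      ((ascPochhammer ℝ k).derivative.eval (-2 * (1/2)) * (-2)) (1/2) :=
    ((ascPochhammer ℝ k).hasDerivAt _).comp _ hinner
  rw [hcomp.deriv]
  norm_num
  rcases Nat.lt_or_ge k 2 with h | h
  · interval_cases k <;> simp [ascPochhammer_one]
  · rw [asc_deriv_neg_one h]
    have : k ≠ 0 := by omega
    have : k ≠ 1 := by omega
    simp_all
    ring
end

section
/- Σ_{k=2}^∞ 2^{k+1}/((k−1)·k·(k+1)!) = (9 − e²)/2. -/
open Finset

theorem stmt16 :
    ∑' m : ℕ, (2:ℝ) ^ (m+3) /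
        (((m:ℝ)+1) * ((m:ℝ)+2) * (Nat.factorial (m+3) : ℝ)) =
      (9 - Real.exp 1 ^ 2) / 2 := by
  have hexp2 : Real.exp 1 ^ 2 = Real.exp 2 := by
    rw [pow_two, ← Real.exp_add]; norm_num
  -- the exponential series at 2
  have h2 : HasSum (fun n : ℕ => (2:ℝ) ^ n / n.factorial) (Real.exp 2) := by
    rw [Real.exp_eq_exp_ℝ]
    exact NormedSpace.expSeries_div_hasSum_exp (2:ℝ)
  -- drop the first three terms
  have h3 : HasSum (fun n : ℕ => (2:ℝ) ^ (n+3) / (n+3).factorial) (Real.exp 2 - 5) := by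
    refine (hasSum_nat_add_iff (f := fun n : ℕ => (2:ℝ) ^ n / n.factorial) 3).2 ?_
    convert h2 using 1
    · rfl
    have h5 : ∑ i ∈ range 3, (2:ℝ) ^ i / i.factorial = 5 := by
      simp [Finset.sum_range_succ, Nat.factorial]
      norm_num
    rw [h5]; ring
  -- the series v
  set v : ℕ → ℝ := fun m => (2:ℝ) ^ (m+2) / (m+3).factorial with hv_def
  have hv : HasSum v ((Real.exp 2 - 5) / 2) := by
    have := h3.div_const 2
    convert this using 2 with m
    · rfl
    rw [hv_def]
    simp only [pow_succ]
    ring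
  -- the telescoping sequence u
  set u : ℕ → ℝ := fun m => (2:ℝ) ^ (m+2) / ((m+1) * (m+2).factorial) with hu_def
  have hupos : ∀ m : ℕ, 0 < ((m:ℝ)+1) * ((m+2).factorial : ℝ) := by
    intro m
    positivity
  have hu0 : u 0 = 2 := by simp [hu_def, Nat.factorial]; norm_num
  -- u tends to 0
  have hutend : Filter.Tendsto u Filter.atTop (nhds 0) := by
    have hb : Filter.Tendsto (fun m : ℕ => (2:ℝ) ^ (m+2) / (m+2).factorial)
        Filter.atTop (nhds 0) := by
      have := h2.summable.tendsto_atTop_zero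
      exact this.comp (Filter.tendsto_add_atTop_nat 2)
    refine squeeze_zero (fun m => ?_) (fun m => ?_) hb
    · rw [hu_def]; positivity
    · rw [hu_def]
      apply div_le_div_of_nonneg_left (by positivity) (by positivity)
      have h1 : (1:ℝ) ≤ (m:ℝ) + 1 := by push_cast; linarith [Nat.cast_nonneg (α := ℝ) m]
      nlinarith [(Nat.cast_pos (α := ℝ)).2 (Nat.factorial_pos (m+2))]
  -- telescoping has sum u 0 = 2
  have hd : HasSum (fun m => u m - u (m+1)) 2 := by
    have key : ∀ N : ℕ, ∑ m ∈ range N, (u m - u (m+1)) = u 0 - u N := by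
      intro N
      exact Finset.sum_range_sub' u N
    have : Filter.Tendsto (fun N : ℕ => ∑ m ∈ range N, (u m - u (m+1)))
        Filter.atTop (nhds 2) := by
      simp only [key]
      rw [show (2:ℝ) = u 0 - 0 by rw [hu0]; ring]
      exact Filter.Tendsto.sub tendsto_const_nhds hutend
    -- nonnegativity of the terms
    have hnn : ∀ m : ℕ, 0 ≤ u m - u (m+1) := by
      intro m
      rw [hu_def]
      simp only
      rw [sub_nonneg, div_le_div_iff₀ (hupos (m+1)) (hupos m)]
      have hf1 : ((m+1+2).factorial : ℝ) = ((m:ℝ)+3) * ((m+2).factorial : ℝ) := by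
        push_cast [show m+1+2 = (m+2)+1 by ring, Nat.factorial_succ]
        ring
      have hfp : (0:ℝ) < ((m+2).factorial : ℝ) := by positivity
      push_cast [hf1]
      have hp : (2:ℝ) ^ (m+1+2) = 2 * 2 ^ (m+2) := by ring
      rw [hp]
      have key2 : 2*((m:ℝ)+1) ≤ ((m:ℝ)+2)*((m:ℝ)+3) := by
        nlinarith [Nat.cast_nonneg (α := ℝ) m]
      nlinarith [mul_le_mul_of_nonneg_right key2
        (le_of_lt (mul_pos (pow_pos (show (0:ℝ) < 2 by norm_num) (m+2)) hfp))]
    exact (hasSum_iff_tendsto_nat_of_nonneg hnn 2).2 this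
  -- combine
  have hsum : HasSum (fun m : ℕ => (2:ℝ) ^ (m+3) /
      (((m:ℝ)+1) * ((m:ℝ)+2) * (Nat.factorial (m+3) : ℝ))) (2 - (Real.exp 2 - 5)/2) := by
    have := hd.sub hv
    convert this using 2 with m
    · rfl
    rw [hu_def, hv_def]
    simp only
    have hf3 : ((m+3).factorial : ℝ) = ((m:ℝ)+3) * ((m+2).factorial : ℝ) := by
      push_cast [show m+3 = (m+2)+1 by ring, Nat.factorial_succ]
      ring
    have hf2 : ((m+1+2).factorial : ℝ) = ((m:ℝ)+3) * ((m+2).factorial : ℝ) := by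
      push_cast [show m+1+2 = (m+2)+1 by ring, Nat.factorial_succ]
      ring
    have hfp : (0:ℝ) < ((m+2).factorial : ℝ) := by positivity
    have hm0 : (0:ℝ) ≤ (m:ℝ) := Nat.cast_nonneg m
    rw [hf3]
    push_cast
    field_simp
    ring
  rw [hsum.tsum_eq, hexp2]
  ring
end
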